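/- arXiv:2602.13917 — 6 statements merged into one kernel-verified Lean document; each statement's English description precedes it below -/
import Mathlib

section
/- For every natural number n > 0, the map (a, b) ↦ p a b is a bijection from the set {0, 1, ..., n−1} × {0, 1, ..., n−1} onto the set {0, 1, ..., n² − 1}. -/
/-- The pairing function `p a b = M·(M+1) − a + b` if `M = max a b` is even,
and `M·(M+1) + a − b` otherwise. -/
def pairFn (a b : ℕ) : ℕ :=
  if Even (max a b) then max a b * (max a b + 1) - a + b
  else max a b * (max a b + 1) + a - b

lemma pairFn_lb (a b : ℕ) : max a b * max a b ≤ pairFn a b := by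
  unfold pairFn
  have ha : a ≤ max a b := le_max_left a b
  have hb : b ≤ max a b := le_max_right a b
  have h : max a b * (max a b + 1) = max a b * max a b + max a b := by ring
  split <;> omega

lemma pairFn_ub (a b : ℕ) : pairFn a b ≤ max a b * max a b + 2 * max a b := by
  unfold pairFn
  have ha : a ≤ max a b := le_max_left a b
  have hb : b ≤ max a b := le_max_right a b
  have h : max a b * (max a b + 1) = max a b * max a b + max a b := by ring
  split <;> omega

lemma pairFn_max_eq {a b c d : ℕ} (h : pairFn a b = pairFn c d) :
    max a b = max c d := by
  by_contra hne
  have key : ∀ x y z w : ℕ, max x y < max z w → pairFn x y < pairFn z w := by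
    intro x y z w hlt
    have h1 := pairFn_ub x y
    have h2 := pairFn_lb z w
    have h3 : (max x y + 1) * (max x y + 1) ≤ max z w * max z w :=
      Nat.mul_le_mul hlt hlt
    have h4 : (max x y + 1) * (max x y + 1)
        = max x y * max x y + 2 * max x y + 1 := by ring
    omega
  rcases Nat.lt_or_ge (max a b) (max c d) with hlt | hge
  · exact absurd h (Nat.ne_of_lt (key _ _ _ _ hlt))
  · have : max c d < max a b := lt_of_le_of_ne hge (Ne.symm hne)
    exact absurd h.symm (Nat.ne_of_lt (key _ _ _ _ this))

lemma pairFn_eq (a b : ℕ) :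
    (Even (max a b) ∧ pairFn a b + a = max a b * (max a b + 1) + b) ∨
    (¬ Even (max a b) ∧ pairFn a b + b = max a b * (max a b + 1) + a) := by
  unfold pairFn
  have ha : a ≤ max a b := le_max_left a b
  have hb : b ≤ max a b := le_max_right a b
  have h : max a b * (max a b + 1) = max a b * max a b + max a b := by ring
  split_ifs with hp
  · exact Or.inl ⟨hp, by omega⟩
  · exact Or.inr ⟨hp, by omega⟩

theorem pairFn_bijOn_square (n : ℕ) (hn : 0 < n) :
    Set.BijOn (fun q : ℕ × ℕ => pairFn q.1 q.2)
      (Set.Iio n ×ˢ Set.Iio n) (Set.Iio (n ^ 2)) := by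
  have hsq : n ^ 2 = n * n := sq n
  refine ⟨?_, ?_, ?_⟩
  · rintro ⟨a, b⟩ ⟨ha, hb⟩
    simp only [Set.mem_Iio] at *
    have h1 := pairFn_ub a b
    have hm : max a b < n := max_lt ha hb
    have h2 : (max a b + 1) * (max a b + 1) ≤ n * n :=
      Nat.mul_le_mul hm hm
    have h3 : (max a b + 1) * (max a b + 1)
        = max a b * max a b + 2 * max a b + 1 := by ring
    omega
  · rintro ⟨a, b⟩ ⟨ha, hb⟩ ⟨c, d⟩ ⟨hc, hd⟩ heq
    simp only at heq
    have hmax := pairFn_max_eq heq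
    have ea := pairFn_eq a b
    have ec := pairFn_eq c d
    rw [← hmax] at ec
    have h1 : a ≤ max a b := le_max_left a b
    have h2 : b ≤ max a b := le_max_right a b
    have h3 : c ≤ max c d := le_max_left c d
    have h4 : d ≤ max c d := le_max_right c d
    rw [← hmax] at h3 h4
    have h5 : max a b = a ∨ max a b = b := max_choice a b
    have h6 : max c d = c ∨ max c d = d := max_choice c d
    rw [← hmax] at h6
    simp only [Prod.mk.injEq]
    rcases ea with ⟨hp, e1⟩ | ⟨hp, e1⟩ <;>
      rcases ec with ⟨hq, e2⟩ | ⟨hq, e2⟩ <;>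
      first
        | exact absurd hp hq
        | exact absurd hq hp
        | omega
  · intro v hv
    simp only [Set.mem_Iio] at hv
    set m := Nat.sqrt v with hm
    have h1 : m * m ≤ v := Nat.sqrt_le v
    have h2 : v < (m + 1) * (m + 1) := Nat.lt_succ_sqrt v
    have h3 : (m + 1) * (m + 1) = m * m + 2 * m + 1 := by ring
    have hmn : m < n := by
      by_contra h
      push_neg at h
      have : n * n ≤ m * m := Nat.mul_le_mul h h
      omega
    have hprod : m * (m + 1) = m * m + m := by ring
    by_cases hpar : Even m
    · by_cases hr : v ≤ m * m + m
      · refine ⟨(m, v - m * m), ⟨?_, ?_⟩, ?_⟩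
        · simpa using hmn
        · simp only [Set.mem_Iio]; omega
        · show pairFn m (v - m * m) = v
          unfold pairFn
          rw [max_eq_left (by omega)]
          rw [if_pos hpar]
          omega
      · refine ⟨(m * m + 2 * m - v, m), ⟨?_, ?_⟩, ?_⟩
        · simp only [Set.mem_Iio]; omega
        · simpa using hmn
        · show pairFn (m * m + 2 * m - v) m = v
          unfold pairFn
          rw [max_eq_right (by omega)]
          rw [if_pos hpar]
          omega
    · by_cases hr : v ≤ m * m + m
      · refine ⟨(v - m * m, m), ⟨?_, ?_⟩, ?_⟩
        · simp only [Set.mem_Iio]; omega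
        · simpa using hmn
        · show pairFn (v - m * m) m = v
          unfold pairFn
          rw [max_eq_right (by omega)]
          rw [if_neg hpar]
          omega
      · refine ⟨(m, m * m + 2 * m - v), ⟨?_, ?_⟩, ?_⟩
        · simpa using hmn
        · simp only [Set.mem_Iio]; omega
        · show pairFn m (m * m + 2 * m - v) = v
          unfold pairFn
          rw [max_eq_left (by omega)]
          rw [if_neg hpar]
          omega
end

section
/- For all natural numbers i and j with i ≠ j, there exist arbitrarily large n ∈ ℕ such that p i n < p j n; that is, for every m ∈ ℕ there exists n ≥ m with p i n < p j n. -/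
theorem pairFn_arbitrarily_large_lt (i j : ℕ) (hij : i ≠ j) :
    ∀ m : ℕ, ∃ n : ℕ, m ≤ n ∧ pairFn i n < pairFn j n := by
  intro m
  set k := m + i + j + 1 with hk
  rcases lt_or_gt_of_ne hij with h | h
  · -- i < j : pick odd n
    refine ⟨2 * k + 1, by omega, ?_⟩
    set n := 2 * k + 1 with hn
    have hi : max i n = n := max_eq_right (by omega)
    have hj : max j n = n := max_eq_right (by omega)
    have hodd : ¬ Even n := by simp [hn, parity_simps]
    have hle : n ≤ n * (n + 1) := Nat.le_mul_of_pos_right n (by omega)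
    simp only [pairFn, hi, hj, if_neg hodd]
    omega
  · -- j < i : pick even n
    refine ⟨2 * k, by omega, ?_⟩
    set n := 2 * k with hn
    have hi : max i n = n := max_eq_right (by omega)
    have hj : max j n = n := max_eq_right (by omega)
    have heven : Even n := ⟨k, by omega⟩
    have hle : i ≤ n * (n + 1) := le_trans (by omega) (Nat.le_mul_of_pos_right n (by omega))
    simp only [pairFn, hi, hj, if_pos heven]
    omega
end

section
/- For all natural numbers i, k, n, if i < n and k ≤ n, then p i k ≤ p i n. -/
theorem pairFn_mono_right (i k n : ℕ) (hi : i < n) (hk : k ≤ n) :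
    pairFn i k ≤ pairFn i n := by
  rcases eq_or_lt_of_le hk with rfl | hk'
  · exact le_refl _
  · set M := max i k with hM
    have hiM : i ≤ M := le_max_left _ _
    have hkM : k ≤ M := le_max_right _ _
    have hMn : M + 1 ≤ n := by
      have := max_lt hi hk'
      omega
    have h1 : pairFn i k ≤ (M + 1) * (M + 1) := by
      unfold pairFn
      rw [← hM]
      have hexp : (M + 1) * (M + 1) = M * (M + 1) + M + 1 := by ring
      split <;> omega
    have h2 : (M + 1) * (M + 1) ≤ n * n := Nat.mul_le_mul hMn hMn
    have h3 : n * n ≤ pairFn i n := by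
      unfold pairFn
      rw [max_eq_right hi.le]
      have hexp : n * (n + 1) = n * n + n := by ring
      split <;> omega
    omega
end

section
/- For all natural numbers i, j with i ≠ j, every partial recursive function f : ℕ → ℕ (in the sense of Nat.Partrec), and every finite sequence t of natural numbers, there exist a finite sequence t′ extending t (i.e. t is a prefix of t′) and a natural number n with i < n and j < n, p i n ≤ length t′, and p j n ≤ length t′, such that every value y of f at the code of the first p i n entries of t′ satisfies y ≠ (the code of the first p j n entries of t′). Here finite sequences of naturals are coded as natural numbers via a fixed effective encoding of List ℕ (e.g. Mathlib's Encodable instance). -/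
lemma pairFn_even {a n : ℕ} (h : a ≤ n) (hn : Even n) :
    pairFn a n = n * n + 2 * n - a := by
  unfold pairFn
  rw [max_eq_right h, if_pos hn]
  have : n * (n + 1) = n * n + n := by ring
  omega

lemma pairFn_odd {a n : ℕ} (h : a ≤ n) (hn : ¬ Even n) :
    pairFn a n = n * n + a := by
  unfold pairFn
  rw [max_eq_right h, if_neg hn]
  have : n * (n + 1) = n * n + n := by ring
  omega

lemma exists_good_n (i j : ℕ) (hij : i ≠ j) (L : ℕ) :
    ∃ n, i < n ∧ j < n ∧ pairFn i n < pairFn j n ∧ L < pairFn j n := by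
  rcases lt_or_gt_of_ne hij with h | h
  · -- i < j : take n odd
    refine ⟨2 * (i + j + L) + 1, by omega, by omega, ?_, ?_⟩
    · rw [pairFn_odd (by omega) (by simp [Nat.even_add_one, parity_simps]),
        pairFn_odd (by omega) (by simp [Nat.even_add_one, parity_simps])]
      omega
    · rw [pairFn_odd (by omega) (by simp [Nat.even_add_one, parity_simps])]
      nlinarith
  · -- j < i : take n even
    refine ⟨2 * (i + j + L) + 2, by omega, by omega, ?_, ?_⟩
    · rw [pairFn_even (by omega) ⟨i + j + L + 1, by ring⟩,
        pairFn_even (by omega) ⟨i + j + L + 1, by ring⟩]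
      omega
    · rw [pairFn_even (by omega) ⟨i + j + L + 1, by ring⟩]
      have : L + j < (2 * (i + j + L) + 2) * (2 * (i + j + L) + 2) := by nlinarith
      omega

/-- Requirements are dense: any finite sequence `t` can be extended to a
finite sequence `t'` on which the machine `f` fails to compute the first
`p j n` entries from the first `p i n` entries, for some suitable `n`. -/
theorem requirement_dense (i j : ℕ) (hij : i ≠ j) (f : ℕ →. ℕ)
    (hf : Nat.Partrec f) (t : List ℕ) :
    ∃ t' : List ℕ, t <+: t' ∧ ∃ n : ℕ, i < n ∧ j < n ∧
      pairFn i n ≤ t'.length ∧ pairFn j n ≤ t'.length ∧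
      ∀ y ∈ f (Encodable.encode (t'.take (pairFn i n))),
        y ≠ Encodable.encode (t'.take (pairFn j n)) := by
  obtain ⟨n, hin, hjn, hPQ, hLQ⟩ := exists_good_n i j hij t.length
  set P := pairFn i n with hP
  set Q := pairFn j n with hQ
  set u0 : List ℕ := t ++ List.replicate (Q - 1 - t.length) 0 with hu0
  have hu0len : u0.length = Q - 1 := by
    simp [hu0]; omega
  have htake : ∀ c : ℕ, (u0 ++ [c]).take P = u0.take P := by
    intro c
    exact List.take_append_of_le_length (by omega)
  have hlen : ∀ c : ℕ, (u0 ++ [c]).length = Q := by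
    intro c; simp [hu0len]; omega
  have htakeQ : ∀ c : ℕ, (u0 ++ [c]).take Q = u0 ++ [c] := by
    intro c; exact List.take_of_length_le (by rw [hlen c])
  have hpre : ∀ c : ℕ, t <+: (u0 ++ [c]) := by
    intro c
    exact ⟨List.replicate (Q - 1 - t.length) 0 ++ [c], by simp [hu0]⟩
  by_cases hdom : (f (Encodable.encode (u0.take P))).Dom
  · set y0 := (f (Encodable.encode (u0.take P))).get hdom with hy0
    by_cases hy : Encodable.encode (u0 ++ [0]) = y0
    · refine ⟨u0 ++ [1], hpre 1, n, hin, hjn, by rw [hlen]; omega, by rw [hlen], ?_⟩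
      intro y hyy
      rw [htake 1] at hyy
      have : y = y0 := Part.mem_unique hyy (Part.get_mem hdom)
      subst this
      rw [htakeQ]
      intro hcon
      rw [← hy] at hcon
      have := Encodable.encode_injective hcon.symm
      simp at this
    · refine ⟨u0 ++ [0], hpre 0, n, hin, hjn, by rw [hlen]; omega, by rw [hlen], ?_⟩
      intro y hyy
      rw [htake 0] at hyy
      have : y = y0 := Part.mem_unique hyy (Part.get_mem hdom)
      subst this
      rw [htakeQ]
      exact fun hcon => hy hcon.symm
  · refine ⟨u0 ++ [0], hpre 0, n, hin, hjn, by rw [hlen]; omega, by rw [hlen], ?_⟩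
    intro y hyy
    rw [htake 0] at hyy
    exact absurd hyy.fst hdom
end

section
/- There exists a function h : ℕ → ℕ such that for all natural numbers i, j with i ≠ j and every partial recursive function f : ℕ → ℕ (in the sense of Nat.Partrec), there exists n ∈ ℕ with i < n and j < n such that every value y of f at the code of the finite sequence (h 0, h 1, ..., h (p i n − 1)) satisfies y ≠ (the code of the finite sequence (h 0, h 1, ..., h (p j n − 1))); that is, the machine f does not correctly compute the first p j n values of h from the first p i n values of h. -/
open Classical

/-- Pick `n` bigger than `i`, `j`, `b`, with parity chosen so `pairFn i n < pairFn j n`. -/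
def pickN (i j b : ℕ) : ℕ :=
  if i < j then (if Odd (max i j + b + 1) then max i j + b + 1 else max i j + b + 2)
  else (if Even (max i j + b + 1) then max i j + b + 1 else max i j + b + 2)

lemma pickN_ge (i j b : ℕ) : max i j + b + 1 ≤ pickN i j b := by
  unfold pickN; split <;> split <;> omega

lemma pairFn_of_lt {a n : ℕ} (h : a < n) :
    pairFn a n = if Even n then n * (n + 1) - a + n else n * (n + 1) + a - n := by
  unfold pairFn
  rw [max_eq_right h.le]

lemma sq_aux (n : ℕ) : n * (n + 1) = n * n + n ∧ n ≤ n * n := by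
  constructor
  · ring
  · cases n with
    | zero => simp
    | succ k => exact Nat.le_mul_of_pos_left _ (by omega)

lemma pairFn_lt_pairFn {i j b : ℕ} (hij : i ≠ j) :
    pairFn i (pickN i j b) < pairFn j (pickN i j b) := by
  have hi : i < pickN i j b := by have := pickN_ge i j b; omega
  have hj : j < pickN i j b := by have := pickN_ge i j b; omega
  rw [pairFn_of_lt hi, pairFn_of_lt hj]
  set n := pickN i j b with hn
  obtain ⟨hs1, hs2⟩ := sq_aux n
  rcases lt_or_gt_of_ne hij with h | h
  · -- i < j : n is odd
    have hodd : ¬ Even n := by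
      rw [hn]; unfold pickN
      rw [if_pos h]
      split
      · rwa [Nat.not_even_iff_odd]
      · rename_i h2
        rw [Nat.not_odd_iff_even] at h2
        have : max i j + b + 2 = (max i j + b + 1) + 1 := by omega
        rw [this, Nat.even_add_one]
        exact not_not_intro h2
    rw [if_neg hodd, if_neg hodd]
    omega
  · -- j < i : n is even
    have heven : Even n := by
      rw [hn]; unfold pickN
      rw [if_neg (by omega)]
      split
      · assumption
      · rename_i h2
        rw [Nat.not_even_iff_odd] at h2
        have : max i j + b + 2 = (max i j + b + 1) + 1 := by omega
        rw [this]
        exact h2.add_one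
    rw [if_pos heven, if_pos heven]
    omega

lemma le_pairFn_of_lt {a n : ℕ} (h : a < n) : n ≤ pairFn a n := by
  rw [pairFn_of_lt h]
  obtain ⟨hs1, hs2⟩ := sq_aux n
  split <;> omega

/-- First intermediate list in a diagonalization step. -/
noncomputable def extL1 (l : List ℕ) (i j : ℕ) : List ℕ :=
  l ++ List.replicate (pairFn i (pickN i j l.length) - l.length) 0

/-- Second intermediate list in a diagonalization step. -/
noncomputable def extL2 (l : List ℕ) (i j : ℕ) : List ℕ :=
  extL1 l i j ++
    List.replicate (pairFn j (pickN i j l.length) - pairFn i (pickN i j l.length) - 1) 0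

/-- One diagonalization step. -/
noncomputable def extStep (l : List ℕ) (i j : ℕ) (c : Nat.Partrec.Code) : List ℕ :=
  if i = j then l ++ [0] else
  if Encodable.encode (extL2 l i j ++ [0]) ∈ c.eval (Encodable.encode (extL1 l i j))
  then extL2 l i j ++ [1]
  else extL2 l i j ++ [0]

lemma extL1_len (l : List ℕ) (i j : ℕ) : (extL1 l i j).length = pairFn i (pickN i j l.length) := by
  have hg := pickN_ge i j l.length
  have h1 : l.length ≤ pairFn i (pickN i j l.length) :=
    le_trans (by omega) (le_pairFn_of_lt (by omega))
  simp [extL1]; omega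

lemma extL2_len (l : List ℕ) (i j : ℕ) (hij : i ≠ j) :
    (extL2 l i j).length = pairFn j (pickN i j l.length) - 1 := by
  have h2 := pairFn_lt_pairFn (b := l.length) hij
  simp [extL2, extL1_len]; omega

lemma extStep_prefix (l : List ℕ) (i j : ℕ) (c : Nat.Partrec.Code) :
    l <+: extStep l i j c ∧ l.length < (extStep l i j c).length := by
  unfold extStep
  have hpre : l <+: extL2 l i j := by
    unfold extL2 extL1
    exact ((l.prefix_append _).trans (List.prefix_append _ _))
  have hlen : l.length ≤ (extL2 l i j).length := hpre.length_le
  split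
  · simp
  split <;>
  · refine ⟨hpre.trans (List.prefix_append _ _), ?_⟩
    simp; omega

lemma extStep_spec (l : List ℕ) (i j : ℕ) (c : Nat.Partrec.Code) (hij : i ≠ j) :
    ∃ n : ℕ, i < n ∧ j < n ∧ pairFn i n ≤ pairFn j n ∧
      (extStep l i j c).length = pairFn j n ∧
      ∀ y ∈ c.eval (Encodable.encode ((extStep l i j c).take (pairFn i n))),
        y ≠ Encodable.encode (extStep l i j c) := by
  have hg := pickN_ge i j l.length
  set n := pickN i j l.length with hn
  have hi : i < n := by omega
  have hj : j < n := by omega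
  have h2 : pairFn i n < pairFn j n := pairFn_lt_pairFn hij
  have hl1 := extL1_len l i j
  have hl2 := extL2_len l i j hij
  rw [← hn] at hl1 hl2
  have htake : ∀ b : ℕ, (extL2 l i j ++ [b]).take (pairFn i n) = extL1 l i j := by
    intro b
    rw [List.take_append_of_le_length (by omega), extL2,
      List.take_append_of_le_length (by omega), List.take_of_length_le (by omega)]
  refine ⟨n, hi, hj, h2.le, ?_, ?_⟩
  · unfold extStep
    rw [if_neg hij]
    split <;> (simp; omega)
  · unfold extStep
    rw [if_neg hij]
    split
    · rename_i hmem
      intro y hy heq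
      rw [htake 1] at hy
      have h01 := Part.mem_unique hmem (heq ▸ hy)
      have := Encodable.encode_injective h01
      simp at this
    · rename_i hmem
      intro y hy heq
      rw [htake 0] at hy
      exact hmem (heq ▸ hy)

/-- Stage construction. -/
noncomputable def stage : ℕ → List ℕ
  | 0 => []
  | (k+1) =>
    extStep (stage k) (Denumerable.ofNat (ℕ × ℕ × Nat.Partrec.Code) k).1
      (Denumerable.ofNat (ℕ × ℕ × Nat.Partrec.Code) k).2.1
      (Denumerable.ofNat (ℕ × ℕ × Nat.Partrec.Code) k).2.2

lemma stage_prefix_succ (k : ℕ) : stage k <+: stage (k+1) :=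
  (extStep_prefix _ _ _ _).1

lemma stage_len (k : ℕ) : k ≤ (stage k).length := by
  induction k with
  | zero => simp [stage]
  | succ k ih =>
    have := (extStep_prefix (stage k) (Denumerable.ofNat (ℕ × ℕ × Nat.Partrec.Code) k).1
      (Denumerable.ofNat (ℕ × ℕ × Nat.Partrec.Code) k).2.1
      (Denumerable.ofNat (ℕ × ℕ × Nat.Partrec.Code) k).2.2).2
    show k + 1 ≤ (extStep _ _ _ _).length
    omega

lemma stage_prefix {a b : ℕ} (h : a ≤ b) : stage a <+: stage b := by
  induction b with
  | zero => simp_all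
  | succ b ih =>
    rcases Nat.lt_or_ge a (b+1) with h' | h'
    · exact (ih (by omega)).trans (stage_prefix_succ b)
    · have : a = b + 1 := by omega
      subst this; rfl

/-- The path. -/
noncomputable def pathH (m : ℕ) : ℕ := (stage (m+1)).getD m 0

lemma pathH_eq {m s : ℕ} (h : m < (stage s).length) : (stage s).getD m 0 = pathH m := by
  have h1 : m < (stage (m+1)).length := lt_of_lt_of_le (Nat.lt_succ_self m) (stage_len (m+1))
  rcases le_total s (m+1) with hle | hle
  · obtain ⟨t, ht⟩ := stage_prefix hle
    unfold pathH
    rw [← ht, List.getD_append _ _ _ _ h]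
  · obtain ⟨t, ht⟩ := stage_prefix hle
    unfold pathH
    rw [← ht, List.getD_append _ _ _ _ h1]

lemma range_map_pathH {t s : ℕ} (h : t ≤ (stage s).length) :
    (List.range t).map pathH = (stage s).take t := by
  apply List.ext_getElem
  · simp; omega
  · intro m h1 h2
    simp only [List.getElem_map, List.getElem_range, List.getElem_take]
    have hm : m < t := by simpa using h1
    have hms : m < (stage s).length := by omega
    rw [← pathH_eq hms, List.getD_eq_getElem _ _ hms]

/-- There is a path `h : ℕ → ℕ` satisfying every diagonalization requirement:
for all `i ≠ j` and every partial recursive `f`, there is some `n > i, j` such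
that `f` does not compute the first `p j n` values of `h` from the first
`p i n` values of `h`. -/
theorem exists_noncomputable_path :
    ∃ h : ℕ → ℕ, ∀ i j : ℕ, i ≠ j → ∀ f : ℕ →. ℕ, Nat.Partrec f →
      ∃ n : ℕ, i < n ∧ j < n ∧
        ∀ y ∈ f (Encodable.encode ((List.range (pairFn i n)).map h)),
          y ≠ Encodable.encode ((List.range (pairFn j n)).map h) := by
  refine ⟨pathH, fun i j hij f hf => ?_⟩
  obtain ⟨c, hc⟩ := Nat.Partrec.Code.exists_code.mp hf
  set k := Encodable.encode ((i, j, c) : ℕ × ℕ × Nat.Partrec.Code) with hk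
  have hstage : stage (k+1) = extStep (stage k) i j c := by
    show extStep (stage k) _ _ _ = _
    rw [hk, Denumerable.ofNat_encode]
  obtain ⟨n, hin, hjn, hle, hlen, hspec⟩ := extStep_spec (stage k) i j c hij
  rw [← hstage] at hlen hspec
  refine ⟨n, hin, hjn, fun y hy heq => ?_⟩
  have e1 : (List.range (pairFn i n)).map pathH = (stage (k+1)).take (pairFn i n) :=
    range_map_pathH (by omega)
  have e2 : (List.range (pairFn j n)).map pathH = stage (k+1) := by
    rw [range_map_pathH (le_of_eq hlen.symm), List.take_of_length_le (le_of_eq hlen)]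
  rw [e1, ← hc] at hy
  rw [e2] at heq
  exact hspec y hy heq
end

section
/- For every computable function h : ℕ → ℕ and all natural numbers i, j with i ≠ j, there exists a partial recursive function f : ℕ → ℕ (in the sense of Nat.Partrec) such that for every n ∈ ℕ with i < n and j < n, f applied to the code of the finite sequence (h 0, h 1, ..., h (p i n − 1)) terminates with value equal to the code of the finite sequence (h 0, h 1, ..., h (p j n − 1)). Consequently, no computable h can satisfy the diagonalization property of the non-computable path construction. -/
lemma pairFn_bounds {i n : ℕ} (hin : i < n) :
    n * n ≤ pairFn i n ∧ pairFn i n ≤ n * n + 2 * n := by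
  have hm : max i n = n := max_eq_right hin.le
  have h1 : n * (n + 1) = n * n + n := by ring
  unfold pairFn
  rw [hm]
  split <;> omega

lemma pairFn_strictMonoOn {i a b : ℕ} (ha : i < a) (hab : a < b) :
    pairFn i a < pairFn i b := by
  have h1 := pairFn_bounds ha
  have h2 := pairFn_bounds (ha.trans hab)
  have : a * a + 2 * a < b * b := by nlinarith
  omega

lemma primrec_pairFn (i : ℕ) : Primrec fun n => pairFn i n := by
  have hmax : Primrec fun n : ℕ => max i n := Primrec.nat_max.comp (Primrec.const i) Primrec.id
  have heven : PrimrecPred fun n : ℕ => Even (max i n) := by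
    have : PrimrecPred fun n : ℕ => (max i n) % 2 = 0 :=
      Primrec.eq.comp (Primrec.nat_mod.comp hmax (Primrec.const 2)) (Primrec.const 0)
    exact this.of_eq fun n => (Nat.even_iff).symm
  have hM1 : Primrec fun n : ℕ => max i n * (max i n + 1) :=
    Primrec.nat_mul.comp hmax (Primrec.nat_add.comp hmax (Primrec.const 1))
  exact (Primrec.ite heven
    (Primrec.nat_add.comp (Primrec.nat_sub.comp hM1 (Primrec.const i)) Primrec.id)
    (Primrec.nat_sub.comp (Primrec.nat_add.comp hM1 (Primrec.const i)) Primrec.id)).of_eq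
    fun n => by simp [pairFn]

lemma computable_rangeMap {h : ℕ → ℕ} (hh : Computable h) :
    Computable fun k => (List.range k).map h := by
  have : Computable fun k : ℕ =>
      Nat.rec (motive := fun _ => List ℕ) [] (fun n l => l ++ [h n]) k := by
    exact Computable.nat_rec Computable.id (Computable.const ([] : List ℕ))
      ((Computable.list_concat.comp (Computable.snd.comp Computable.snd)
        (hh.comp (Computable.fst.comp Computable.snd))).to₂)
  exact this.of_eq fun k => by
    induction k with
    | zero => simp
    | succ n ih => simp [List.range_succ, ih]

/-- If `h` is computable, then for any `i ≠ j` there is a partial recursive `f`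
computing the code of the first `p j n` values of `h` from the code of the first
`p i n` values of `h` for every `n > i, j`; consequently, no computable `h`
satisfies the diagonalization property of the non-computable path construction. -/
theorem computable_path_fails_diagonalization (h : ℕ → ℕ) (hh : Computable h)
    (i j : ℕ) (hij : i ≠ j) :
    (∃ f : ℕ →. ℕ, Nat.Partrec f ∧ ∀ n : ℕ, i < n → j < n →
        f (Encodable.encode ((List.range (pairFn i n)).map h)) =
          Part.some (Encodable.encode ((List.range (pairFn j n)).map h))) ∧
    ¬ (∀ f : ℕ →. ℕ, Nat.Partrec f →
        ∃ n : ℕ, i < n ∧ j < n ∧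
          ∀ y ∈ f (Encodable.encode ((List.range (pairFn i n)).map h)),
            y ≠ Encodable.encode ((List.range (pairFn j n)).map h)) := by
  set K := max i j with hK
  set g : ℕ → ℕ := fun m => Encodable.encode ((List.range (pairFn i (m + K + 1))).map h) with hg
  set g' : ℕ → ℕ := fun m => Encodable.encode ((List.range (pairFn j (m + K + 1))).map h)
    with hg'
  set f : ℕ →. ℕ := fun x => (Nat.rfind fun m => Part.some (decide (g m = x))).map g' with hf
  have hrm := computable_rangeMap hh
  have hgc : Computable g :=
    Computable.encode.comp (hrm.comp ((primrec_pairFn i).to_comp.comp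
      (Computable.succ.comp (Primrec.nat_add.to_comp.comp Computable.id (Computable.const K)))))
  have hg'c : Computable g' :=
    Computable.encode.comp (hrm.comp ((primrec_pairFn j).to_comp.comp
      (Computable.succ.comp (Primrec.nat_add.to_comp.comp Computable.id (Computable.const K)))))
  have hb : Computable fun p : ℕ × ℕ => decide (g p.2 = p.1) :=
    (Primrec.beq.to_comp.comp (hgc.comp Computable.snd) Computable.fst).of_eq
      fun p => by by_cases hq : g p.2 = p.1 <;> simp [hq]
  have hfp : Partrec f := by
    have h1 : Partrec fun x : ℕ => Nat.rfind fun m => Part.some (decide (g m = x)) :=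
      (Partrec.rfind hb.to₂.partrec₂).of_eq fun x => by
        rfl
    exact (h1.map (hg'c.comp Computable.snd).to₂).of_eq fun x => rfl
  -- key evaluation
  have key : ∀ n : ℕ, i < n → j < n →
      f (Encodable.encode ((List.range (pairFn i n)).map h)) =
        Part.some (Encodable.encode ((List.range (pairFn j n)).map h)) := by
    intro n hin hjn
    have hKn : K < n := max_lt hin hjn
    set m := n - K - 1 with hm
    have hmn : m + K + 1 = n := by omega
    have hmem : m ∈ Nat.rfind fun m => Part.some (decide
        (g m = Encodable.encode ((List.range (pairFn i n)).map h))) := by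
      refine Nat.mem_rfind.mpr ?_
      constructor
      · simp [hg, hmn]
      · intro k hk
        simp only [Part.mem_some_iff]
        have hne : g k ≠ Encodable.encode ((List.range (pairFn i n)).map h) := by
          intro heq
          have := Encodable.encode_injective heq
          have hlen : pairFn i (k + K + 1) = pairFn i n := by
            have := congrArg List.length this
            simpa using this
          have hlt : pairFn i (k + K + 1) < pairFn i n :=
            pairFn_strictMonoOn (by omega) (by omega)
          omega
        simp [hne]
    show (Nat.rfind fun m => Part.some (decide
        (g m = Encodable.encode ((List.range (pairFn i n)).map h)))).map g' = _
    rw [Part.eq_some_iff]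
    rw [show (Encodable.encode ((List.range (pairFn j n)).map h)) = g' m by
      simp [hg', hmn]]
    exact Part.mem_map g' hmem
  refine ⟨⟨f, Partrec.nat_iff.mp hfp, key⟩, fun H => ?_⟩
  obtain ⟨n, hin, hjn, hy⟩ := H f (Partrec.nat_iff.mp hfp)
  exact hy _ (by rw [key n hin hjn]; exact Part.mem_some _) rfl
end
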